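/- If 1 ≤ d₁ ≤ d₂ ≤ m(q−1) and d₁ ≡ d₂ (mod q−1), then PRM_{d₁}(q,m) ⊆ PRM_{d₂}(q,m). -/

import Mathlib

/-!
Over `F_q` every `x ≠ 0` satisfies `x ^ (q - 1) = 1`. Hence multiplying a monomial by
`X j ^ (t * (q - 1))`, for a variable `X j` that already occurs in it, does not change the function
it defines on `F_q^σ`: where `x_j = 0` both sides vanish, elsewhere the extra factor is `1`.
Padding each monomial of degree `d₁` in this way turns a form of degree `d₁` into a form of degree
`d₂` with the same values everywhere, in particular at the chosen representatives.
-/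

open MvPolynomial

/-- The fixed representatives of the points of projective `m`-space over `F`:
the leftmost nonzero coordinate equals 1. -/
def stdRepP (F : Type*) [Field F] (m : ℕ) : Set (Fin (m + 1) → F) :=
  {v | ∃ i, v i = 1 ∧ ∀ j, j < i → v j = 0}

/-- The evaluation map at the fixed representatives. -/
noncomputable def evP (F : Type*) [Field F] (m : ℕ) :
    MvPolynomial (Fin (m + 1)) F →ₗ[F] (stdRepP F m → F) :=
  LinearMap.pi fun Q => (aeval (Q : Fin (m + 1) → F)).toLinearMap

/-- The projective Reed–Muller code of degree `d` over projective `m`-space. -/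
noncomputable def PRMm (F : Type*) [Field F] (m d : ℕ) : Submodule F (stdRepP F m → F) :=
  (homogeneousSubmodule (Fin (m + 1)) F d).map (evP F m)

namespace MvPolynomial

variable (σ F : Type*) [Field F]

noncomputable def evalFun : MvPolynomial σ F →ₗ[F] ((σ → F) → F) :=
  LinearMap.pi fun v => (aeval v).toLinearMap

noncomputable def homogeneousFunctions (d : ℕ) : Submodule F ((σ → F) → F) :=
  (homogeneousSubmodule σ F d).map (evalFun σ F)

variable {σ F} [Fintype F]

theorem eval_monomial_add_single_of_dvd {s : σ →₀ ℕ} {j : σ} (hj : s j ≠ 0) {e : ℕ}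
    (he : Fintype.card F - 1 ∣ e) (c : F) (v : σ → F) :
    eval v (monomial (s + Finsupp.single j e) c) = eval v (monomial s c) := by
  rw [monomial_add_single, map_mul, map_pow, eval_X]
  by_cases hv : v j = 0
  · have hs : eval v (monomial s c) = 0 := by
      rw [eval_monomial, mul_eq_zero]
      exact Or.inr <| Finsupp.prod_eq_zero_iff.mpr
        ⟨j, Finsupp.mem_support_iff.mpr hj, by simp [hv, hj]⟩
    rw [hs, zero_mul]
  · obtain ⟨t, rfl⟩ := he
    rw [pow_mul, FiniteField.pow_card_sub_one_eq_one _ hv, one_pow, mul_one]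

theorem homogeneousFunctions_le_of_modEq {d₁ d₂ : ℕ} (h1 : 1 ≤ d₁) (h12 : d₁ ≤ d₂)
    (hmod : d₁ ≡ d₂ [MOD Fintype.card F - 1]) :
    homogeneousFunctions σ F d₁ ≤ homogeneousFunctions σ F d₂ := by
  have he : Fintype.card F - 1 ∣ d₂ - d₁ := (Nat.modEq_iff_dvd' h12).mp hmod
  rw [homogeneousFunctions, Submodule.map_le_iff_le_comap,
    homogeneousSubmodule_eq_finsupp_supported, AddMonoidAlgebra.supported_eq_span_single,
    Submodule.span_le]
  rintro _ ⟨s, (hs : s.degree = d₁), rfl⟩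
  obtain ⟨j, hj⟩ : ∃ j, s j ≠ 0 := by
    by_contra! h
    simp [show s = 0 from Finsupp.ext h] at hs
    omega
  refine ⟨monomial (s + Finsupp.single j (d₂ - d₁)) 1, ?_, ?_⟩
  · apply isHomogeneous_monomial
    rw [map_add, hs, Finsupp.degree_single]
    omega
  · funext v
    exact eval_monomial_add_single_of_dvd hj he 1 v

end MvPolynomial

theorem PRMm_eq_map_homogeneousFunctions (F : Type*) [Field F] (m d : ℕ) :
    PRMm F m d = (homogeneousFunctions (Fin (m + 1)) F d).map
      (LinearMap.funLeft F F ((↑) : stdRepP F m → Fin (m + 1) → F)) := by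
  rw [homogeneousFunctions, ← Submodule.map_comp]
  rfl

theorem stmt1_general {F : Type*} [Field F] [Fintype F] (q m d₁ d₂ : ℕ)
    (hq : Fintype.card F = q)
    (h1 : 1 ≤ d₁) (h12 : d₁ ≤ d₂)
    (hmod : d₁ ≡ d₂ [MOD q - 1]) :
    PRMm F m d₁ ≤ PRMm F m d₂ := by
  subst hq
  rw [PRMm_eq_map_homogeneousFunctions, PRMm_eq_map_homogeneousFunctions]
  exact Submodule.map_mono (homogeneousFunctions_le_of_modEq h1 h12 hmod)

/-- If `1 ≤ d₁ ≤ d₂ ≤ m(q−1)` and `d₁ ≡ d₂ (mod q−1)`, then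
`PRM_{d₁}(q,m) ⊆ PRM_{d₂}(q,m)`. -/
theorem stmt1 {F : Type*} [Field F] [Fintype F] (q m d₁ d₂ : ℕ)
    (hq : Fintype.card F = q) (hm : 1 ≤ m)
    (h1 : 1 ≤ d₁) (h12 : d₁ ≤ d₂) (h2 : d₂ ≤ m * (q - 1))
    (hmod : d₁ ≡ d₂ [MOD q - 1]) :
    PRMm F m d₁ ≤ PRMm F m d₂ :=
  stmt1_general q m d₁ d₂ hq h1 h12 hmod
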